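/- arXiv:2102.07541 — 2 statements merged into one kernel-verified Lean document; each statement's English description precedes it below -/
import Mathlib

section
/- Let Z be a random vector on ℝ^k with a Lipschitz continuous, everywhere positive probability density q_Z. Let σ_g : ℝ → ℝ be a bounded continuous function with lim_{r→−∞} σ_g(r) < lim_{r→+∞} σ_g(r). Let σ : ℝ → ℝ be twice differentiable with σ'(t) > 0 for all t and sup_t(|σ(t)| + |σ'(t)| + |σ''(t)|) < ∞, let N_d ≤ n, and let ψ_j(x) = σ(a_jᵀx + b_j) for j = 1,…,N_d, where a_1,…,a_{N_d} ∈ ℝ^n are linearly independent and b_j ∈ ℝ. Then every stationary point θ_s of J (over finite signed Borel measures on ℝ^p) satisfies J(θ_s) = 0. -/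
/-!
Perturbing θ by a point mass at κ = (0, β) shifts the generator output by the constant vector
σ_g(β), so stationarity in that direction reads ∑ⱼ rⱼ cⱼ ⟨aⱼ, σ_g(β)⟩ = 0, where r is the
residual and cⱼ = E[σ'(aⱼᵀ g_θ(Z) + bⱼ)] > 0. Since σ_g takes two different values, moving one
coordinate of β between them isolates each coordinate of ∑ⱼ rⱼ cⱼ aⱼ, which therefore vanishes;
linear independence of the aⱼ then forces r = 0.
-/

open MeasureTheory Filter

noncomputable section

/-- Parameter space ℝ^p with p = nk + n: a pair (κ_w, κ_b). -/
abbrev Par (n k : ℕ) : Type := (Fin n → Fin k → ℝ) × (Fin n → ℝ)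

/-- Integral of a vector-valued function against a finite signed Borel measure,
via the Jordan decomposition. -/
noncomputable def sInt {α : Type*} [MeasurableSpace α] (θ : MeasureTheory.SignedMeasure α)
    {E : Type*} [NormedAddCommGroup E] [NormedSpace ℝ E] (f : α → E) : E :=
  (∫ x, f x ∂θ.toJordanDecomposition.posPart) -
    ∫ x, f x ∂θ.toJordanDecomposition.negPart

/-- Generator feature function φ(z; κ) = σ_g(κ_w z + κ_b), σ_g applied entrywise. -/
noncomputable def phi (n k : ℕ) (σg : ℝ → ℝ) (κ : Par n k)
    (z : EuclideanSpace ℝ (Fin k)) : EuclideanSpace ℝ (Fin n) :=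
  WithLp.toLp 2 (fun i => σg ((∑ j, κ.1 i j * z j) + κ.2 i))

/-- Infinite-width generator g_θ(z) = ∫ φ(z; κ) dθ(κ). -/
noncomputable def gen (n k : ℕ) (σg : ℝ → ℝ) (θ : MeasureTheory.SignedMeasure (Par n k))
    (z : EuclideanSpace ℝ (Fin k)) : EuclideanSpace ℝ (Fin n) :=
  sInt θ (fun κ => phi n k σg κ z)

/-- Discriminator features Ψ(x) = (σ(a_jᵀx + b_j))_{j=1}^{N_d}. -/
noncomputable def Psi (n Nd : ℕ) (σ : ℝ → ℝ) (a : Fin Nd → EuclideanSpace ℝ (Fin n))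
    (b : Fin Nd → ℝ) (x : EuclideanSpace ℝ (Fin n)) : EuclideanSpace ℝ (Fin Nd) :=
  WithLp.toLp 2 (fun j => σ ((∑ i, a j i * x i) + b j))

/-- Residual r(θ) = E[Ψ(X)] − E[Ψ(g_θ(Z))], where Z has density q_Z. -/
noncomputable def resid (n k Nd : ℕ) (σg σ : ℝ → ℝ)
    (a : Fin Nd → EuclideanSpace ℝ (Fin n)) (b : Fin Nd → ℝ)
    (PX : Measure (EuclideanSpace ℝ (Fin n)))
    (qZ : EuclideanSpace ℝ (Fin k) → ℝ)
    (θ : MeasureTheory.SignedMeasure (Par n k)) : EuclideanSpace ℝ (Fin Nd) :=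
  (∫ x, Psi n Nd σ a b x ∂PX) -
    ∫ z, qZ z • Psi n Nd σ a b (gen n k σg θ z)

/-- Loss J(θ) = (1/2)‖r(θ)‖₂². -/
noncomputable def Jloss (n k Nd : ℕ) (σg σ : ℝ → ℝ)
    (a : Fin Nd → EuclideanSpace ℝ (Fin n)) (b : Fin Nd → ℝ)
    (PX : Measure (EuclideanSpace ℝ (Fin n)))
    (qZ : EuclideanSpace ℝ (Fin k) → ℝ)
    (θ : MeasureTheory.SignedMeasure (Par n k)) : ℝ :=
  (1 / 2) * ‖resid n k Nd σg σ a b PX qZ θ‖ ^ 2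

section SignedIntegral

variable {α : Type*} [MeasurableSpace α] {E : Type*} [NormedAddCommGroup E] [NormedSpace ℝ E]
  {f : α → E}

theorem sInt_eq_integral_sub_integral {s : SignedMeasure α} {μ ν : Measure α}
    [IsFiniteMeasure μ] [IsFiniteMeasure ν] (hs : s = μ.toSignedMeasure - ν.toSignedMeasure)
    (hf : ∀ ρ : Measure α, [IsFiniteMeasure ρ] → Integrable f ρ) :
    sInt s f = (∫ x, f x ∂μ) - ∫ x, f x ∂ν := by
  set P := s.toJordanDecomposition.posPart
  set N := s.toJordanDecomposition.negPart
  have hPN : P + ν = μ + N := by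
    rw [← Measure.toSignedMeasure_eq_toSignedMeasure_iff, Measure.toSignedMeasure_add,
      Measure.toSignedMeasure_add, ← sub_eq_sub_iff_add_eq_add, ← hs]
    exact s.toSignedMeasure_toJordanDecomposition
  have h := congrArg (fun ρ => ∫ x, f x ∂ρ) hPN
  simp only [integral_add_measure (hf _) (hf _)] at h
  rw [sInt, sub_eq_sub_iff_add_eq_add]
  exact h

theorem sInt_add_toSignedMeasure_sub_toSignedMeasure (s : SignedMeasure α) (μ ν : Measure α)
    [IsFiniteMeasure μ] [IsFiniteMeasure ν]
    (hf : ∀ ρ : Measure α, [IsFiniteMeasure ρ] → Integrable f ρ) :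
    sInt (s + μ.toSignedMeasure - ν.toSignedMeasure) f
      = sInt s f + (∫ x, f x ∂μ) - ∫ x, f x ∂ν := by
  rw [sInt_eq_integral_sub_integral (μ := s.toJordanDecomposition.posPart + μ)
    (ν := s.toJordanDecomposition.negPart + ν) _ hf, integral_add_measure (hf _) (hf _),
    integral_add_measure (hf _) (hf _), sInt]
  · abel
  · rw [Measure.toSignedMeasure_add, Measure.toSignedMeasure_add]
    conv_lhs => rw [← s.toSignedMeasure_toJordanDecomposition]
    simp only [JordanDecomposition.toSignedMeasure]
    abel

theorem smul_toSignedMeasure_eq_sub (μ : Measure α) [IsFiniteMeasure μ] (c : ℝ) :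
    c • μ.toSignedMeasure
      = (c.toNNReal • μ).toSignedMeasure - ((-c).toNNReal • μ).toSignedMeasure := by
  ext i hi
  rw [Measure.toSignedMeasure_smul, Measure.toSignedMeasure_smul, NNReal.smul_def,
    NNReal.smul_def]
  simp only [sub_apply, smul_apply, smul_eq_mul, ← sub_mul,
    Real.coe_toNNReal', max_zero_sub_max_neg_zero_eq_self]

theorem sInt_add_smul_dirac [MeasurableSingletonClass α] [CompleteSpace E]
    (s : SignedMeasure α) (a : α) (c : ℝ)
    (hf : ∀ ρ : Measure α, [IsFiniteMeasure ρ] → Integrable f ρ) :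
    sInt (s + c • (Measure.dirac a).toSignedMeasure) f = sInt s f + c • f a := by
  rw [smul_toSignedMeasure_eq_sub, ← add_sub_assoc,
    sInt_add_toSignedMeasure_sub_toSignedMeasure _ _ _ hf, integral_smul_nnreal_measure,
    integral_smul_nnreal_measure, integral_dirac, NNReal.smul_def, NNReal.smul_def, add_sub_assoc,
    ← sub_smul, Real.coe_toNNReal', Real.coe_toNNReal', max_zero_sub_max_neg_zero_eq_self]

end SignedIntegral

theorem EuclideanSpace.norm_le_sqrt_card_mul {ι : Type*} [Fintype ι] {x : EuclideanSpace ℝ ι}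
    {M : ℝ} (hM : 0 ≤ M) (hx : ∀ i, |x i| ≤ M) : ‖x‖ ≤ √(Fintype.card ι) * M := by
  have hsum : ∑ i, ‖x i‖ ^ 2 ≤ Fintype.card ι * M ^ 2 := by
    simpa using Finset.sum_le_sum fun i (_ : i ∈ Finset.univ) =>
      pow_le_pow_left₀ (norm_nonneg (x i)) (hx i) 2
  rw [EuclideanSpace.norm_eq, ← Real.sqrt_sq hM, ← Real.sqrt_mul (Nat.cast_nonneg _)]
  exact Real.sqrt_le_sqrt hsum

section Generator

variable {n k : ℕ} {σg : ℝ → ℝ} {M : ℝ}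

theorem continuous_phi (hσg : Continuous σg) :
    Continuous fun p : Par n k × EuclideanSpace ℝ (Fin k) => phi n k σg p.1 p.2 := by
  unfold phi
  fun_prop

theorem norm_phi_le (hM : ∀ r, |σg r| ≤ M) (κ : Par n k) (z : EuclideanSpace ℝ (Fin k)) :
    ‖phi n k σg κ z‖ ≤ √n * M := by
  simpa using EuclideanSpace.norm_le_sqrt_card_mul ((abs_nonneg _).trans (hM 0))
    fun i => hM ((∑ j, κ.1 i j * z j) + κ.2 i)

theorem phi_zero_weight (β : Fin n → ℝ) (z : EuclideanSpace ℝ (Fin k)) :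
    phi n k σg (0, β) z = WithLp.toLp 2 (σg ∘ β) := by
  simp [phi, Function.comp_def]

theorem integrable_phi (hσg : Continuous σg) (hM : ∀ r, |σg r| ≤ M)
    (z : EuclideanSpace ℝ (Fin k)) (ρ : Measure (Par n k)) [IsFiniteMeasure ρ] :
    Integrable (fun κ => phi n k σg κ z) ρ :=
  (integrable_const (√n * M)).mono'
    ((continuous_phi hσg).comp (Continuous.prodMk_left z)).aestronglyMeasurable
    (ae_of_all _ fun κ => norm_phi_le hM κ z)

theorem continuous_gen (hσg : Continuous σg) (hM : ∀ r, |σg r| ≤ M)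
    (θ : SignedMeasure (Par n k)) : Continuous (gen n k σg θ) := by
  have hcont (ρ : Measure (Par n k)) [IsFiniteMeasure ρ] :
      Continuous fun z => ∫ κ, phi n k σg κ z ∂ρ :=
    continuous_of_dominated
      (fun z => ((continuous_phi hσg).comp (Continuous.prodMk_left z)).aestronglyMeasurable)
      (fun z => ae_of_all _ fun κ => norm_phi_le hM κ z) (integrable_const _)
      (ae_of_all _ fun κ => (continuous_phi hσg).comp (Continuous.prodMk_right κ))
  exact (hcont _).sub (hcont _)

theorem gen_add_smul_dirac (hσg : Continuous σg) (hM : ∀ r, |σg r| ≤ M)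
    (θ : SignedMeasure (Par n k)) (c : ℝ) (β : Fin n → ℝ) (z : EuclideanSpace ℝ (Fin k)) :
    gen n k σg (θ + c • (Measure.dirac (0, β)).toSignedMeasure) z
      = gen n k σg θ z + c • WithLp.toLp 2 (σg ∘ β) := by
  rw [gen, sInt_add_smul_dirac _ _ _ fun ρ _ => integrable_phi hσg hM z ρ, phi_zero_weight, gen]

end Generator

section Calculus

variable {Ω : Type*} [MeasurableSpace Ω] {μ : Measure Ω}

theorem integral_pos_of_forall_pos [NeZero μ] {f : Ω → ℝ} (hf : Integrable f μ)
    (hpos : ∀ ω, 0 < f ω) : 0 < ∫ ω, f ω ∂μ := by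
  refine (integral_pos_iff_support_of_nonneg (fun ω => (hpos ω).le) hf).2 ?_
  rw [Function.support_eq_univ fun ω => (hpos ω).ne']
  exact Measure.measure_univ_pos.2 (NeZero.ne μ)

theorem hasDerivAt_integral_mul_comp_add_mul {q h : Ω → ℝ} {f : ℝ → ℝ} {M M' : ℝ}
    (hq : Integrable q μ) (hh : AEStronglyMeasurable h μ) (hf : Differentiable ℝ f)
    (hfM : ∀ t, |f t| ≤ M) (hf'M : ∀ t, |deriv f t| ≤ M') (α : ℝ) :
    HasDerivAt (fun t => ∫ ω, q ω * f (h ω + t * α) ∂μ)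
      ((∫ ω, q ω * deriv f (h ω) ∂μ) * α) 0 := by
  have hmeas (g : ℝ → ℝ) (hg : Measurable g) (t : ℝ) :
      AEStronglyMeasurable (fun ω => g (h ω + t * α)) μ :=
    (hg.comp_aemeasurable (hh.aemeasurable.add_const _)).aestronglyMeasurable
  have hderiv (ω : Ω) (t : ℝ) : HasDerivAt (fun t => q ω * f (h ω + t * α))
      (q ω * (deriv f (h ω + t * α) * α)) t :=
    ((hf _).hasDerivAt.comp t ((hasDerivAt_mul_const α).const_add (h ω))).const_mul _
  have hF := (hasDerivAt_integral_of_dominated_loc_of_deriv_le (x₀ := 0)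
    (F := fun t ω => q ω * f (h ω + t * α)) (F' := fun t ω => q ω * (deriv f (h ω + t * α) * α))
    (bound := fun ω => |q ω| * (M' * |α|))
    univ_mem (Eventually.of_forall fun t => hq.1.mul (hmeas f hf.continuous.measurable t))
    (hq.mul_bdd (hmeas f hf.continuous.measurable 0) (ae_of_all _ fun ω => hfM _))
    (hq.1.mul ((hmeas _ (measurable_deriv f) 0).mul_const α))
    (ae_of_all _ fun ω t _ => by
      rw [norm_mul, norm_mul, Real.norm_eq_abs, Real.norm_eq_abs, Real.norm_eq_abs]
      gcongr
      exact hf'M _)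
    (hq.abs.mul_const _) (ae_of_all _ fun ω t _ => hderiv ω t)).2
  simpa only [zero_mul, add_zero, ← mul_assoc, integral_mul_const] using hF

end Calculus

section Loss

variable {n k Nd : ℕ} {σg σ : ℝ → ℝ} {a : Fin Nd → EuclideanSpace ℝ (Fin n)} {b : Fin Nd → ℝ}
  {PX : Measure (EuclideanSpace ℝ (Fin n))} {qZ : EuclideanSpace ℝ (Fin k) → ℝ} {M : ℝ}

theorem continuous_Psi (hσ : Continuous σ) : Continuous (Psi n Nd σ a b) := by
  unfold Psi
  fun_prop

theorem norm_Psi_le (hM : ∀ t, |σ t| ≤ M) (x : EuclideanSpace ℝ (Fin n)) :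
    ‖Psi n Nd σ a b x‖ ≤ √Nd * M := by
  simpa using EuclideanSpace.norm_le_sqrt_card_mul ((abs_nonneg _).trans (hM 0))
    fun j => hM ((∑ i, a j i * x i) + b j)

theorem resid_apply (hσ : Continuous σ) (hM : ∀ t, |σ t| ≤ M) (hq : Integrable qZ)
    {θ : SignedMeasure (Par n k)} (hG : AEStronglyMeasurable (gen n k σg θ)) (j : Fin Nd) :
    resid n k Nd σg σ a b PX qZ θ j = (∫ x, Psi n Nd σ a b x ∂PX) j
      - ∫ z, qZ z * σ ((∑ i, a j i * gen n k σg θ z i) + b j) := by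
  have hint : Integrable fun z => qZ z • Psi n Nd σ a b (gen n k σg θ z) :=
    hq.smul_bdd _ ((continuous_Psi hσ).comp_aestronglyMeasurable hG)
      (ae_of_all _ fun z => norm_Psi_le hM _)
  rw [resid, PiLp.sub_apply]
  exact congrArg _ ((EuclideanSpace.proj j).integral_comp_comm hint).symm

theorem hasDerivAt_Jloss_add_smul_dirac {Mg M' : ℝ} (hσg : Continuous σg)
    (hσgM : ∀ r, |σg r| ≤ Mg) (hσ : Differentiable ℝ σ) (hσM : ∀ t, |σ t| ≤ M)
    (hσ'M : ∀ t, |deriv σ t| ≤ M') (hq : Integrable qZ) (θ : SignedMeasure (Par n k))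
    (β : Fin n → ℝ) :
    HasDerivAt (fun c : ℝ => Jloss n k Nd σg σ a b PX qZ
        (θ + c • (Measure.dirac ((0, β) : Par n k)).toSignedMeasure))
      (-∑ j, resid n k Nd σg σ a b PX qZ θ j
          * (∫ z, qZ z * deriv σ ((∑ i, a j i * gen n k σg θ z i) + b j))
          * ∑ i, a j i * σg (β i)) 0 := by
  set h : Fin Nd → EuclideanSpace ℝ (Fin k) → ℝ := fun j z => (∑ i, a j i * gen n k σg θ z i) + b j
  set α : Fin Nd → ℝ := fun j => ∑ i, a j i * σg (β i)
  have harg (c : ℝ) (j : Fin Nd) (z : EuclideanSpace ℝ (Fin k)) :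
      (∑ i, a j i * gen n k σg (θ + c • (Measure.dirac ((0, β) : Par n k)).toSignedMeasure) z i)
        + b j = h j z + c * α j := by
    simp only [gen_add_smul_dirac hσg hσgM, PiLp.add_apply, PiLp.smul_apply, smul_eq_mul,
      Function.comp_apply, mul_add, Finset.sum_add_distrib, h, α, Finset.mul_sum, mul_left_comm c]
    ring
  have hline : (fun c : ℝ => Jloss n k Nd σg σ a b PX qZ
        (θ + c • (Measure.dirac ((0, β) : Par n k)).toSignedMeasure))
      = fun c => 1 / 2 * ∑ j, ((∫ x, Psi n Nd σ a b x ∂PX) j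
          - ∫ z, qZ z * σ (h j z + c * α j)) ^ 2 := by
    funext c
    rw [Jloss, EuclideanSpace.norm_sq_eq]
    congr 1
    refine Finset.sum_congr rfl fun j _ => ?_
    rw [Real.norm_eq_abs, sq_abs,
      resid_apply hσ.continuous hσM hq (continuous_gen hσg hσgM _).aestronglyMeasurable]
    simp only [harg]
  have hG : Continuous (gen n k σg θ) := continuous_gen hσg hσgM θ
  have hh (j : Fin Nd) : Continuous (h j) := by
    simp only [h]
    fun_prop
  have hU (j : Fin Nd) := hasDerivAt_integral_mul_comp_add_mul hq
    (hh j).aestronglyMeasurable hσ hσM hσ'M (α j)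
  have hJ := (HasDerivAt.fun_sum fun j (_ : j ∈ Finset.univ) =>
    ((hU j).const_sub ((∫ x, Psi n Nd σ a b x ∂PX) j)).pow 2).const_mul (1 / 2)
  rw [hline]
  refine hJ.congr_deriv ?_
  rw [Finset.mul_sum, ← Finset.sum_neg_distrib]
  refine Finset.sum_congr rfl fun j _ => ?_
  simp only [resid_apply hσ.continuous hσM hq hG.aestronglyMeasurable, zero_mul, add_zero, h, α]
  push_cast
  ring

end Loss

theorem eq_zero_of_forall_sum_mul_comp_eq_zero {ι γ : Type*} [Fintype ι] {f : γ → ℝ} {s t : γ}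
    (hst : f s ≠ f t) {y : ι → ℝ} (h : ∀ β : ι → γ, ∑ i, y i * f (β i) = 0) : y = 0 := by
  classical
  funext i₀
  set β := Function.update (fun _ => s) i₀ t
  have hsingle : ∑ i, y i * (f (β i) - f s) = y i₀ * (f t - f s) := by
    rw [Finset.sum_eq_single i₀ (fun i _ hi => by simp [β, Function.update_of_ne hi])
      (by simp)]
    simp [β]
  have hzero : ∑ i, y i * (f (β i) - f s) = 0 := by
    simp only [mul_sub, Finset.sum_sub_distrib, h β, h fun _ => s, sub_self]
  exact (mul_eq_zero.1 (hsingle ▸ hzero)).resolve_right (sub_ne_zero.2 hst.symm)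

theorem wgan_infinite_small_discriminator_no_spurious_stationary_points_general
    (n k Nd : ℕ)
    -- (AL): latent density
    (qZ : EuclideanSpace ℝ (Fin k) → ℝ)
    (hq_pos : ∀ z, 0 < qZ z)
    (hq_prob : ∫ z, qZ z = 1)
    -- (AG): generator activation
    (σg : ℝ → ℝ) (hσg_cont : Continuous σg)
    (hσg_bdd : ∃ M, ∀ r, |σg r| ≤ M)
    (hσg_lim : ∃ l u : ℝ, Tendsto σg atBot (nhds l) ∧ Tendsto σg atTop (nhds u) ∧ l < u)
    -- (AD): discriminator activation
    (σ : ℝ → ℝ) (hσ_diff : Differentiable ℝ σ)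
    (hσ'_pos : ∀ t, 0 < deriv σ t)
    (hσ_bdd : ∃ M, ∀ t, |σ t| + |deriv σ t| + |deriv (deriv σ) t| ≤ M)
    -- discriminator weights: linearly independent
    (a : Fin Nd → EuclideanSpace ℝ (Fin n)) (b : Fin Nd → ℝ)
    (ha : LinearIndependent ℝ a)
    -- true data distribution
    (PX : Measure (EuclideanSpace ℝ (Fin n)))
    -- θ_s is a stationary point of J
    (θs : MeasureTheory.SignedMeasure (Par n k))
    (hstat : ∀ μ : MeasureTheory.SignedMeasure (Par n k),
      HasDerivAt (fun lam : ℝ => Jloss n k Nd σg σ a b PX qZ (θs + lam • μ)) 0 0) :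
    Jloss n k Nd σg σ a b PX qZ θs = 0 := by
  obtain ⟨Mg, hσgM⟩ := hσg_bdd
  obtain ⟨M, hM⟩ := hσ_bdd
  have hσM (t : ℝ) : |σ t| ≤ M := by
    linarith [hM t, abs_nonneg (deriv σ t), abs_nonneg (deriv (deriv σ) t)]
  have hσ'M (t : ℝ) : |deriv σ t| ≤ M := by
    linarith [hM t, abs_nonneg (σ t), abs_nonneg (deriv (deriv σ) t)]
  have hq : Integrable qZ := Integrable.of_integral_ne_zero (hq_prob ▸ one_ne_zero)
  obtain ⟨s, t, hst⟩ : ∃ s t, σg s ≠ σg t := by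
    obtain ⟨l, u, hl, hu, hlu⟩ := hσg_lim
    by_contra! hconst
    rw [show σg = fun _ => σg 0 from funext fun s => hconst s 0] at hl hu
    exact hlu.ne ((tendsto_nhds_unique tendsto_const_nhds hl).symm.trans
      (tendsto_nhds_unique tendsto_const_nhds hu))
  set r := resid n k Nd σg σ a b PX qZ θs
  set c : Fin Nd → ℝ := fun j => ∫ z, qZ z * deriv σ ((∑ i, a j i * gen n k σg θs z i) + b j)
  have hc_pos (j : Fin Nd) : 0 < c j := by
    refine integral_pos_of_forall_pos (hq.mul_bdd ?_ (ae_of_all _ fun z => hσ'M _))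
      fun z => mul_pos (hq_pos z) (hσ'_pos _)
    have hG := continuous_gen hσg_cont hσgM θs
    exact ((measurable_deriv σ).comp_aemeasurable (by fun_prop : Continuous fun z =>
      (∑ i, a j i * gen n k σg θs z i) + b j).aemeasurable).aestronglyMeasurable
  have hcrit (β : Fin n → ℝ) : ∑ i, (∑ j, r j * c j * a j i) * σg (β i) = 0 := by
    have h := (hasDerivAt_Jloss_add_smul_dirac hσg_cont hσgM hσ_diff hσM hσ'M hq θs β).unique
      (hstat _)
    simp only [Finset.sum_mul, Finset.mul_sum, mul_assoc] at h ⊢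
    rw [Finset.sum_comm]
    exact neg_eq_zero.1 h
  have hrc := Fintype.linearIndependent_iff.1 ha (fun j => r j * c j) <| by
    ext i
    simpa using congrFun (eq_zero_of_forall_sum_mul_comp_eq_zero hst hcrit) i
  have hr : r = 0 := by
    ext j
    exact (mul_eq_zero.1 (hrc j)).resolve_right (hc_pos j).ne'
  rw [Jloss, show resid n k Nd σg σ a b PX qZ θs = 0 from hr, norm_zero]
  ring

/-- WGAN with infinite-width generator, small discriminator (N_d ≤ n) with
linearly independent weights: every stationary point θ_s of J satisfies J(θ_s) = 0. -/
theorem wgan_infinite_small_discriminator_no_spurious_stationary_points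
    (n k Nd : ℕ) (hNd : Nd ≤ n)
    -- (AL): latent density
    (qZ : EuclideanSpace ℝ (Fin k) → ℝ)
    (hq_lip : ∃ L : NNReal, LipschitzWith L qZ)
    (hq_pos : ∀ z, 0 < qZ z)
    (hq_prob : ∫ z, qZ z = 1)
    -- (AG): generator activation
    (σg : ℝ → ℝ) (hσg_cont : Continuous σg)
    (hσg_bdd : ∃ M, ∀ r, |σg r| ≤ M)
    (hσg_lim : ∃ l u : ℝ, Tendsto σg atBot (nhds l) ∧ Tendsto σg atTop (nhds u) ∧ l < u)
    -- (AD): discriminator activation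
    (σ : ℝ → ℝ) (hσ_diff : Differentiable ℝ σ) (hσ'_diff : Differentiable ℝ (deriv σ))
    (hσ'_pos : ∀ t, 0 < deriv σ t)
    (hσ_bdd : ∃ M, ∀ t, |σ t| + |deriv σ t| + |deriv (deriv σ) t| ≤ M)
    -- discriminator weights: linearly independent
    (a : Fin Nd → EuclideanSpace ℝ (Fin n)) (b : Fin Nd → ℝ)
    (ha : LinearIndependent ℝ a)
    -- true data distribution
    (PX : Measure (EuclideanSpace ℝ (Fin n))) (hPX : IsProbabilityMeasure PX)
    -- θ_s is a stationary point of J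
    (θs : MeasureTheory.SignedMeasure (Par n k))
    (hstat : ∀ μ : MeasureTheory.SignedMeasure (Par n k),
      HasDerivAt (fun lam : ℝ => Jloss n k Nd σg σ a b PX qZ (θs + lam • μ)) 0 0) :
    Jloss n k Nd σg σ a b PX qZ θs = 0 :=
  wgan_infinite_small_discriminator_no_spurious_stationary_points_general n k Nd qZ hq_pos hq_prob
    σg hσg_cont hσg_bdd hσg_lim σ hσ_diff hσ'_pos hσ_bdd a b ha PX θs hstat
end
end

section
/- Let N_d ≤ n, let σ : ℝ → ℝ be differentiable with σ'(t) > 0 for all t, and let ψ_j(x) = σ(a_jᵀx + b_j) for j = 1,…,N_d. Suppose the pairs (a_j, b_j) ∈ ℝ^n × ℝ are sampled IID from a probability distribution absolutely continuous with respect to Lebesgue measure on ℝ^{n+1}. Then with probability 1 the Jacobian kernel point condition holds: for every x ∈ ℝ^n, ker(DΨ(x)ᵀ) = {0}, where DΨ(x)ᵀ is the n × N_d matrix whose columns are ∇ψ_j(x) = σ'(a_jᵀx + b_j) a_j. -/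
/-!
Since `σ' > 0`, a vector `η` in the kernel of `DΨ(x)ᵀ` yields the vanishing linear combination
`∑ j, (η j * σ'(a_jᵀx + b_j)) • a_j = 0` with nonzero factors `σ'(…)`, so it suffices that
`a_1, …, a_{N_d}` are almost surely linearly independent, uniformly in `x`. The law of each `a_j`
charges no proper subspace of `ℝⁿ`, these being Lebesgue-null. Drawing the samples one at a time,
by Fubini each new `a_j` almost surely avoids the span of the previous ones, which has dimension
`< N_d ≤ n`.
-/

open MeasureTheory

noncomputable section

open Module Submodule Set

lemma Submodule.span_range_ne_top_of_lt_finrank {K V : Type*} [DivisionRing K] [AddCommGroup V]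
    [Module K V] {m : ℕ} (v : Fin m → V) (hm : m < finrank K V) :
    span K (range v) ≠ ⊤ := by
  intro htop
  have := finrank_range_le_card (R := K) v
  rw [Set.finrank, htop, finrank_top] at this
  simp only [Fintype.card_fin] at this
  omega

lemma LinearIndependent.eq_zero_of_sum_mul_smul_eq_zero {ι R M : Type*} [Fintype ι] [Ring R]
    [NoZeroDivisors R] [AddCommGroup M] [Module R M] {v : ι → M} (hv : LinearIndependent R v)
    {c η : ι → R} (hc : ∀ j, c j ≠ 0) (h : ∑ j, (η j * c j) • v j = 0) (j : ι) : η j = 0 :=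
  (mul_eq_zero.mp (Fintype.linearIndependent_iff.mp hv _ h j)).resolve_right (hc j)

section

variable {E : Type*} [NormedAddCommGroup E] [NormedSpace ℝ E] [FiniteDimensional ℝ E]
  [MeasurableSpace E] [BorelSpace E]

lemma measurableSet_setOf_linearIndependent_comp {α ι : Type*} [MeasurableSpace α] [Finite ι]
    {g : α → E} (hg : Measurable g) :
    MeasurableSet {a : ι → α | LinearIndependent ℝ (g ∘ a)} :=
  isOpen_setOfPred_linearIndependent.measurableSet.preimage
    (measurable_pi_lambda _ fun j => hg.comp (measurable_pi_apply j))

lemma measure_pi_setOf_not_linearIndependent_eq_zero {α : Type*} [MeasurableSpace α]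
    (ν : Measure α) [SigmaFinite ν] {g : α → E} (hg : Measurable g)
    (hν : ∀ S : Submodule ℝ E, S ≠ ⊤ → ν (g ⁻¹' S) = 0) {m : ℕ} (hm : m ≤ finrank ℝ E) :
    Measure.pi (fun _ : Fin m => ν) {a | ¬ LinearIndependent ℝ (g ∘ a)} = 0 := by
  have hmeas (k : ℕ) : MeasurableSet {a : Fin k → α | ¬ LinearIndependent ℝ (g ∘ a)} :=
    (measurableSet_setOf_linearIndependent_comp hg).compl
  induction m with
  | zero => simp
  | succ m ih =>
    set T := MeasurableEquiv.piFinSuccAbove (fun _ : Fin (m + 1) => α) 0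
    have hT := (measurePreserving_piFinSuccAbove (fun _ : Fin (m + 1) => ν) 0).symm T
    rw [← hT.measure_preimage (hmeas _).nullMeasurableSet,
      Measure.prod_apply_symm (T.symm.measurable (hmeas _))]
    refine lintegral_eq_zero_of_ae_eq_zero ?_
    have hindep : ∀ᵐ y ∂Measure.pi (fun _ : Fin m => ν), LinearIndependent ℝ (g ∘ y) :=
      ae_iff.mpr (ih (by omega))
    filter_upwards [hindep] with y hy
    refine measure_mono_null (fun x hx => ?_)
      (hν _ (span_range_ne_top_of_lt_finrank (g ∘ y) (by omega)))
    have hcons : T.symm (x, y) = Fin.cons x y := Fin.insertNth_zero' x y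
    simp only [Set.mem_preimage, Set.mem_ofPred_eq, hcons, Fin.comp_cons,
      linearIndependent_finCons, not_and, not_not] at hx
    exact hx hy

end

lemma measure_fst_preimage_submodule_eq_zero {E F : Type*} [NormedAddCommGroup E]
    [NormedSpace ℝ E] [MeasureSpace E] [BorelSpace E] [FiniteDimensional ℝ E]
    [(volume : Measure E).IsAddHaarMeasure] [MeasureSpace F] [SigmaFinite (volume : Measure F)]
    {ν : Measure (E × F)} (hν : ν ≪ volume) {S : Submodule ℝ E} (hS : S ≠ ⊤) :
    ν (Prod.fst ⁻¹' S) = 0 := by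
  apply hν
  rw [← Set.prod_univ, Measure.volume_eq_prod, Measure.prod_prod,
    Measure.addHaar_submodule _ S hS, zero_mul]

theorem jacobian_kernel_point_condition_as_general
    (n Nd : ℕ) (hNd : Nd ≤ n)
    (σ : ℝ → ℝ) (hσ'_pos : ∀ t, 0 < deriv σ t)
    (ν : Measure (EuclideanSpace ℝ (Fin n) × ℝ)) (hν : IsProbabilityMeasure ν)
    (hνac : ν ≪ volume) :
    (Measure.pi fun _ : Fin Nd => ν)
      {ab : Fin Nd → EuclideanSpace ℝ (Fin n) × ℝ |
        ∀ x : EuclideanSpace ℝ (Fin n), ∀ η : EuclideanSpace ℝ (Fin Nd),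
          (∑ j, (η j * deriv σ ((∑ i, (ab j).1 i * x i) + (ab j).2)) • (ab j).1) = 0 →
          η = 0} = 1 := by
  have hdep := measure_pi_setOf_not_linearIndependent_eq_zero ν measurable_fst
    (fun S hS => measure_fst_preimage_submodule_eq_zero hνac hS)
    (hNd.trans_eq finrank_euclideanSpace_fin.symm)
  have hindep := (prob_compl_eq_zero_iff
    (measurableSet_setOf_linearIndependent_comp (ι := Fin Nd) measurable_fst)).mp hdep
  refine le_antisymm prob_le_one (hindep.symm.le.trans (measure_mono ?_))
  intro ab hab x η hsum
  exact PiLp.ext fun j =>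
    hab.eq_zero_of_sum_mul_smul_eq_zero (fun j => (hσ'_pos _).ne') hsum j

/-- with (a_j, b_j) IID from a distribution absolutely continuous w.r.t.
Lebesgue measure and σ' > 0, the Jacobian kernel point condition
ker(DΨ(x)ᵀ) = {0} for all x holds with probability 1. -/
theorem jacobian_kernel_point_condition_as
    (n Nd : ℕ) (hNd : Nd ≤ n)
    (σ : ℝ → ℝ) (hσ_diff : Differentiable ℝ σ) (hσ'_pos : ∀ t, 0 < deriv σ t)
    (ν : Measure (EuclideanSpace ℝ (Fin n) × ℝ)) (hν : IsProbabilityMeasure ν)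
    (hνac : ν ≪ volume) :
    (Measure.pi fun _ : Fin Nd => ν)
      {ab : Fin Nd → EuclideanSpace ℝ (Fin n) × ℝ |
        ∀ x : EuclideanSpace ℝ (Fin n), ∀ η : EuclideanSpace ℝ (Fin Nd),
          (∑ j, (η j * deriv σ ((∑ i, (ab j).1 i * x i) + (ab j).2)) • (ab j).1) = 0 →
          η = 0} = 1 :=
  jacobian_kernel_point_condition_as_general n Nd hNd σ hσ'_pos ν hν hνac

end
end
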